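/- Reduction Preservation for λ_AST(op): if E[t] is closed and well-typed with computation type T ! Δ and ⟨t; E; U; M; I⟩ → ⟨t'; E'; U'; M'; I'⟩, then E'[t'] is closed and well-typed with computation type T ! Δ. -/
import Mathlib


/- A formalisation of the two-level calculus λ_op-quote (effect handlers,
quotation and splice) and its core language λ_AST(op) (effect handlers, AST
constructors, and dynamic scope-extrusion checking primitives), together with
the mode-indexed elaborations (naïve, lazy, eager, and C4C). -/

namespace MetaLang

abbrev OpName := String
abbrev Eff := Set OpName

/-- Run-time pre-types `R` of λ_AST(op). -/
inductive PreTy : Type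
  | nat  : PreTy
  | fn   : PreTy → Eff → PreTy → PreTy
  | cont : PreTy → Eff → PreTy → PreTy

/-- Level 0 (run-time) value types of λ_op-quote. -/
inductive Ty0 : Type
  | nat  : Ty0
  | fn   : Ty0 → Eff → Ty0 → Ty0
  | cont : Ty0 → Eff → Ty0 → Ty0

/-- Level −1 (compile-time) value types of λ_op-quote. -/
inductive Ty1 : Type
  | nat  : Ty1
  | fn   : Ty1 → Eff → Ty1 → Ty1
  | cont : Ty1 → Eff → Ty1 → Ty1
  | code : Ty0 → Eff → Ty1          -- Code(T⁰ ! ξ)⁻¹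

/-- Erasure of level annotations, turning level 0 types into run-time pre-types. -/
def eraseTy : Ty0 → PreTy
  | .nat => .nat
  | .fn S ξ T => .fn (eraseTy S) ξ (eraseTy T)
  | .cont S ξ T => .cont (eraseTy S) ξ (eraseTy T)

/-- An effect signature: `arg0/res0` type the (run-time) operations occurring
inside quoted code, `arg1/res1` the (compile-time) operations. -/
structure Sig where
  arg0 : OpName → Ty0
  res0 : OpName → Ty0
  arg1 : OpName → Ty1
  res1 : OpName → Ty1

/-! ### Source syntax (de Bruijn, binders annotated with level 0 types) -/

mutual
  inductive SVal : Type
    | var : ℕ → SVal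
    | nat : ℕ → SVal
    | lam : Ty0 → SExpr → SVal
  inductive SExpr : Type
    | app    : SVal → SVal → SExpr
    | ret    : SVal → SExpr
    | seq    : Ty0 → SExpr → SExpr → SExpr     -- do x : T ← e₁ in e₂
    | op     : OpName → SVal → SExpr
    | handle : SExpr → SHandler → SExpr
    | resume : SVal → SVal → SExpr
    | quote  : SExpr → SExpr                    -- ⟨⟨e⟩⟩
    | splice : SExpr → SExpr                    -- $(e)
  inductive SHandler : Type
    | retH : Ty0 → SExpr → SHandler
    | opH  : SHandler → OpName → Ty0 → Ty0 → SExpr → SHandler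
      -- h; op(x : A, k : (B ⇒ξ T)) ↦ e  (annotations record the types of x and k)
end

/-! ### Core syntax of λ_AST(op) -/

/-- Classifier-free formal parameters are pairs of a name and a pre-type. -/
abbrev FPv := ℕ × PreTy

mutual
  /-- Normal forms. -/
  inductive NF : Type
    | var     : ℕ → NF
    | nat     : ℕ → NF
    | lam     : Tm → NF
    | kont    : Tm → NF
    | fp      : ℕ → PreTy → NF            -- a formal parameter α_R
    | astNat  : ℕ → NF
    | astVar  : NF → NF
    | astLam  : NF → NF → NF
    | astApp  : NF → NF → NF
    | astCont : NF → NF → NF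
    | astRet  : NF → NF
    | astDo   : NF → NF → NF → NF          -- Do(c₁, x, c₂)
    | astOp   : OpName → NF → NF
    | astHwith : NF → NF → NF
    | astHret  : NF → NF → NF
    | astHop   : NF → OpName → NF → NF → NF → NF
  /-- Terms. -/
  inductive Tm : Type
    | app    : NF → NF → Tm
    | ret    : NF → Tm
    | seq    : Tm → Tm → Tm
    | op     : OpName → NF → Tm
    | handle : Tm → Hd → Tm
    | resume : NF → NF → Tm
    | check  : NF → Tm
    | checkM : NF → Tm
    | mkvar  : PreTy → Tm
    | dlet   : NF → Tm → Tm
    | tls    : Tm → Tm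
    | err    : Tm
  /-- Handlers. -/
  inductive Hd : Type
    | retH : Tm → Hd
    | opH  : Hd → OpName → Tm → Hd
end

def liftR (f : ℕ → ℕ) : ℕ → ℕ
  | 0 => 0
  | n + 1 => f n + 1

mutual
  def NF.rename : NF → (ℕ → ℕ) → NF
    | .var n, f => .var (f n)
    | .nat m, _ => .nat m
    | .lam t, f => .lam (t.rename (liftR f))
    | .kont t, f => .kont (t.rename (liftR f))
    | .fp a R, _ => .fp a R
    | .astNat m, _ => .astNat m
    | .astVar n, f => .astVar (n.rename f)
    | .astLam n₁ n₂, f => .astLam (n₁.rename f) (n₂.rename f)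
    | .astApp n₁ n₂, f => .astApp (n₁.rename f) (n₂.rename f)
    | .astCont n₁ n₂, f => .astCont (n₁.rename f) (n₂.rename f)
    | .astRet n, f => .astRet (n.rename f)
    | .astDo n₁ n₂ n₃, f => .astDo (n₁.rename f) (n₂.rename f) (n₃.rename f)
    | .astOp o n, f => .astOp o (n.rename f)
    | .astHwith n₁ n₂, f => .astHwith (n₁.rename f) (n₂.rename f)
    | .astHret n₁ n₂, f => .astHret (n₁.rename f) (n₂.rename f)
    | .astHop n₁ o n₂ n₃ n₄, f =>
        .astHop (n₁.rename f) o (n₂.rename f) (n₃.rename f) (n₄.rename f)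
  def Tm.rename : Tm → (ℕ → ℕ) → Tm
    | .app n₁ n₂, f => .app (n₁.rename f) (n₂.rename f)
    | .ret n, f => .ret (n.rename f)
    | .seq t₁ t₂, f => .seq (t₁.rename f) (t₂.rename (liftR f))
    | .op o n, f => .op o (n.rename f)
    | .handle t h, f => .handle (t.rename f) (h.rename f)
    | .resume n₁ n₂, f => .resume (n₁.rename f) (n₂.rename f)
    | .check n, f => .check (n.rename f)
    | .checkM n, f => .checkM (n.rename f)
    | .mkvar R, _ => .mkvar R
    | .dlet n t, f => .dlet (n.rename f) (t.rename f)
    | .tls t, f => .tls (t.rename f)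
    | .err, _ => .err
  def Hd.rename : Hd → (ℕ → ℕ) → Hd
    | .retH t, f => .retH (t.rename (liftR f))
    | .opH h o t, f => .opH (h.rename f) o (t.rename (liftR (liftR f)))
end

def liftS (σ : ℕ → NF) : ℕ → NF
  | 0 => .var 0
  | n + 1 => (σ n).rename Nat.succ

mutual
  def NF.subst : NF → (ℕ → NF) → NF
    | .var n, σ => σ n
    | .nat m, _ => .nat m
    | .lam t, σ => .lam (t.subst (liftS σ))
    | .kont t, σ => .kont (t.subst (liftS σ))
    | .fp a R, _ => .fp a R
    | .astNat m, _ => .astNat m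
    | .astVar n, σ => .astVar (n.subst σ)
    | .astLam n₁ n₂, σ => .astLam (n₁.subst σ) (n₂.subst σ)
    | .astApp n₁ n₂, σ => .astApp (n₁.subst σ) (n₂.subst σ)
    | .astCont n₁ n₂, σ => .astCont (n₁.subst σ) (n₂.subst σ)
    | .astRet n, σ => .astRet (n.subst σ)
    | .astDo n₁ n₂ n₃, σ => .astDo (n₁.subst σ) (n₂.subst σ) (n₃.subst σ)
    | .astOp o n, σ => .astOp o (n.subst σ)
    | .astHwith n₁ n₂, σ => .astHwith (n₁.subst σ) (n₂.subst σ)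
    | .astHret n₁ n₂, σ => .astHret (n₁.subst σ) (n₂.subst σ)
    | .astHop n₁ o n₂ n₃ n₄, σ =>
        .astHop (n₁.subst σ) o (n₂.subst σ) (n₃.subst σ) (n₄.subst σ)
  def Tm.subst : Tm → (ℕ → NF) → Tm
    | .app n₁ n₂, σ => .app (n₁.subst σ) (n₂.subst σ)
    | .ret n, σ => .ret (n.subst σ)
    | .seq t₁ t₂, σ => .seq (t₁.subst σ) (t₂.subst (liftS σ))
    | .op o n, σ => .op o (n.subst σ)
    | .handle t h, σ => .handle (t.subst σ) (h.subst σ)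
    | .resume n₁ n₂, σ => .resume (n₁.subst σ) (n₂.subst σ)
    | .check n, σ => .check (n.subst σ)
    | .checkM n, σ => .checkM (n.subst σ)
    | .mkvar R, _ => .mkvar R
    | .dlet n t, σ => .dlet (n.subst σ) (t.subst σ)
    | .tls t, σ => .tls (t.subst σ)
    | .err, _ => .err
  def Hd.subst : Hd → (ℕ → NF) → Hd
    | .retH t, σ => .retH (t.subst (liftS σ))
    | .opH h o t, σ => .opH (h.subst σ) o (t.subst (liftS (liftS σ)))
end

def Tm.subst1 (t : Tm) (n : NF) : Tm :=
  t.subst fun i => match i with | 0 => n | i + 1 => .var i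

def Tm.subst2 (t : Tm) (nk nx : NF) : Tm :=
  t.subst fun i => match i with | 0 => nk | 1 => nx | i + 2 => .var i

def Hd.dom : Hd → Eff
  | .retH _ => ∅
  | .opH h o _ => insert o h.dom

def Hd.retClause : Hd → Tm
  | .retH t => t
  | .opH h _ _ => h.retClause

def Hd.lookup : Hd → OpName → Option Tm
  | .retH _, _ => none
  | .opH h o t, o' => if o = o' then some t else h.lookup o'

/-- The binding position of an AST binder, viewed as a (singleton or empty)
set of formal parameters. -/
def NF.asParam : NF → Set FPv
  | .fp a R => {(a, R)}
  | _ => ∅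

mutual
  /-- `FVs⁰(n)`: the free `Var`s of a normal form. -/
  def NF.fvs : NF → Set FPv
    | .var _ => ∅
    | .nat _ => ∅
    | .lam t => t.fvs
    | .kont t => t.fvs
    | .fp _ _ => ∅
    | .astNat _ => ∅
    | .astVar n => n.asParam ∪ n.fvs
    | .astLam n₁ n₂ => n₂.fvs \ n₁.asParam
    | .astApp n₁ n₂ => n₁.fvs ∪ n₂.fvs
    | .astCont n₁ n₂ => n₁.fvs ∪ n₂.fvs
    | .astRet n => n.fvs
    | .astDo n₁ n₂ n₃ => n₁.fvs ∪ (n₃.fvs \ n₂.asParam)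
    | .astOp _ n => n.fvs
    | .astHwith n₁ n₂ => n₁.fvs ∪ n₂.fvs
    | .astHret n₁ n₂ => n₂.fvs \ n₁.asParam
    | .astHop n₁ _ n₂ n₃ n₄ => n₁.fvs ∪ (n₄.fvs \ (n₂.asParam ∪ n₃.asParam))
  def Tm.fvs : Tm → Set FPv
    | .app n₁ n₂ => n₁.fvs ∪ n₂.fvs
    | .ret n => n.fvs
    | .seq t₁ t₂ => t₁.fvs ∪ t₂.fvs
    | .op _ n => n.fvs
    | .handle t h => t.fvs ∪ h.fvs
    | .resume n₁ n₂ => n₁.fvs ∪ n₂.fvs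
    | .check n => n.fvs
    | .checkM n => n.fvs
    | .mkvar _ => ∅
    | .dlet n t => t.fvs \ n.asParam
    | .tls t => t.fvs
    | .err => ∅
  def Hd.fvs : Hd → Set FPv
    | .retH t => t.fvs
    | .opH h _ t => h.fvs ∪ t.fvs
end

end MetaLang

namespace MetaLang

/-! ### Operational semantics of λ_AST(op) -/

/-- Evaluation frames. -/
inductive CFrame : Type
  | seqF    : Tm → CFrame                 -- do x ← [-] in t₂
  | handleF : Hd → CFrame                 -- handle [-] with h
  | dletF   : ℕ → PreTy → CFrame          -- dlet(α_R, [-])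
  | tlsF    : CFrame                      -- tls([-])

/-- Evaluation contexts, as stacks of frames (head innermost). -/
abbrev CCtx := List CFrame

def plugCF : CFrame → Tm → Tm
  | .seqF t₂, t => .seq t t₂
  | .handleF h, t => .handle t h
  | .dletF a R, t => .dlet (.fp a R) t
  | .tlsF, t => .tls t

/-- `E[t]`. -/
def plugC : CCtx → Tm → Tm
  | [], t => t
  | F :: E, t => plugC E (plugCF F t)

def handledC : CCtx → Eff
  | [] => ∅
  | .handleF h :: E => handledC E ∪ h.dom
  | _ :: E => handledC E

/-- `π_FVs(E)`: the variables declared safe by `dlet` frames in an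
evaluation context. -/
def piFVs : CCtx → Set FPv
  | [] => ∅
  | .dletF a R :: E => insert (a, R) (piFVs E)
  | _ :: E => piFVs E

/-- A deterministic source of fresh formal-parameter names. -/
def next (U : Finset ℕ) : ℕ := (U.sup id) + 1

/-- Configurations `⟨t; E; U; M; I⟩` of λ_AST(op). -/
structure Cfg : Type where
  tm : Tm
  ctx : CCtx
  used : Finset ℕ
  muted : Set FPv
  mark : WithTop ℕ

/-- The small-step operational semantics of λ_AST(op). -/
inductive CStep : Cfg → Cfg → Prop
  | app {t : Tm} {n : NF} {E U M I} :
      CStep ⟨.app (.lam t) n, E, U, M, I⟩ ⟨t.subst1 n, E, U, M, I⟩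
  | seq {n : NF} {t : Tm} {E U M I} :
      CStep ⟨.seq (.ret n) t, E, U, M, I⟩ ⟨t.subst1 n, E, U, M, I⟩
  | hdl {n : NF} {h : Hd} {E U M I} :
      CStep ⟨.handle (.ret n) h, E, U, M, I⟩ ⟨h.retClause.subst1 n, E, U, M, I⟩
  | pushSeq {t₁ t₂ : Tm} {E U M I} :
      CStep ⟨.seq t₁ t₂, E, U, M, I⟩ ⟨t₁, .seqF t₂ :: E, U, M, I⟩
  | pushHandle {t : Tm} {h : Hd} {E U M I} :
      CStep ⟨.handle t h, E, U, M, I⟩ ⟨t, .handleF h :: E, U, M, I⟩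
  | pushDlet {a R t E U M I} :
      CStep ⟨.dlet (.fp a R) t, E, U, M, I⟩ ⟨t, .dletF a R :: E, U, M, I⟩
  | pushTls {t E U M I} :
      CStep ⟨.tls t, E, U, M, I⟩ ⟨t, .tlsF :: E, U, M, I⟩
  | popSeq {n : NF} {t₂ : Tm} {E U M I} :
      CStep ⟨.ret n, .seqF t₂ :: E, U, M, I⟩ ⟨.seq (.ret n) t₂, E, U, M, I⟩
  | popHandle {n : NF} {h : Hd} {E U M I} :
      CStep ⟨.ret n, .handleF h :: E, U, M, I⟩ ⟨.handle (.ret n) h, E, U, M, I⟩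
  | gen {R : PreTy} {E U M I} :
      CStep ⟨.mkvar R, E, U, M, I⟩
            ⟨.ret (.fp (next U) R), E, insert (next U) U, M, I⟩
  | chs {n : NF} {E U M I} :
      n.fvs ⊆ piFVs E →
      CStep ⟨.check n, E, U, M, I⟩ ⟨.ret n, E, U, M, I⟩
  | chf {n : NF} {E U M I} :
      ¬ n.fvs ⊆ piFVs E →
      CStep ⟨.check n, E, U, M, I⟩ ⟨.err, E, U, M, I⟩
  | cms {n : NF} {E U M I} :
      n.fvs \ M ⊆ piFVs E →
      CStep ⟨.checkM n, E, U, M, I⟩ ⟨.ret n, E, U, M, I⟩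
  | cmf {n : NF} {E U M I} :
      ¬ n.fvs \ M ⊆ piFVs E →
      CStep ⟨.checkM n, E, U, M, I⟩ ⟨.err, E, U, M, I⟩
  | tls {n : NF} {E U M I} :
      CStep ⟨.ret n, .tlsF :: E, U, M, I⟩ ⟨.ret n, E, U, ∅, ⊤⟩
  | dlt {n : NF} {a R E U M} {I : WithTop ℕ} :
      CStep ⟨.ret n, .dletF a R :: E, U, M, I⟩
            ⟨.ret n, E, U,
              if (E.length : WithTop ℕ) > I then M else ∅,
              if (E.length : WithTop ℕ) > I then I else ⊤⟩
  | op {h : Hd} {o : OpName} {n : NF} {t : Tm} (E₁ E₂ : CCtx) {U M} {I : WithTop ℕ} :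
      h.lookup o = some t →
      o ∉ handledC E₂ →
      CStep ⟨.op o n, E₂ ++ .handleF h :: E₁, U, M, I⟩
            ⟨t.subst2 (.kont (.handle (plugC E₂ (.ret (.var 0))) h)) n,
              E₁, U, M ∪ piFVs E₂, min (E₁.length : WithTop ℕ) I⟩
  | resume {t : Tm} {n : NF} {E U M I} :
      CStep ⟨.resume (.kont t) n, E, U, M, I⟩ ⟨t.subst1 n, E, U, M, I⟩

/-- Iterated reduction. -/
abbrev CSteps : Cfg → Cfg → Prop := Relation.ReflTransGen CStep

/-- The initial configuration for a core term. -/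
def initCfg (t : Tm) : Cfg := ⟨t, [], ∅, ∅, ⊤⟩

/-- Divergence of a configuration. -/
def CDiverges (k : Cfg) : Prop :=
  ∃ f : ℕ → Cfg, f 0 = k ∧ ∀ n, CStep (f n) (f (n + 1))

/-- A configuration reaches the scope-extrusion error state. -/
def ReachesErr (t : Tm) : Prop :=
  ∃ (E : CCtx) (U : Finset ℕ) (M : Set FPv) (I : WithTop ℕ),
    CSteps (initCfg t) ⟨.err, E, U, M, I⟩

/-- A normal form that is an AST (i.e. is of AST type). -/
def NF.isAST : NF → Prop
  | .astNat _ => True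
  | .astVar _ => True
  | .astLam _ _ => True
  | .astApp _ _ => True
  | .astCont _ _ => True
  | .astRet _ => True
  | .astDo _ _ _ => True
  | .astOp _ _ => True
  | .astHwith _ _ => True
  | .astHret _ _ => True
  | .astHop _ _ _ _ _ => True
  | _ => False

/-- **Lazy scope extrusion** (Definition 4.3): the configuration returns, under
a top-level splice, an AST some of whose free variables are not declared safe. -/
def LazySE (k : Cfg) : Prop :=
  ∃ (n : NF) (E' : CCtx),
    k.tm = .ret n ∧ n.isAST ∧ k.ctx = .tlsF :: E' ∧ ¬ n.fvs ⊆ piFVs k.ctx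

/-- **Eager scope extrusion** (Definition 4.5): the configuration returns an
AST some of whose free variables are not declared safe. -/
def EagerSE (k : Cfg) : Prop :=
  ∃ n : NF, k.tm = .ret n ∧ n.isAST ∧ ¬ n.fvs ⊆ piFVs k.ctx

/-- **Inevitable scope extrusion** (Definition 4.7): the configuration must
reduce to a configuration exhibiting lazy scope extrusion. -/
def InevitableSE (k : Cfg) : Prop :=
  ∃ k' : Cfg, CSteps k k' ∧ LazySE k'

end MetaLang

namespace MetaLang

/-! ### Types and typing of λ_AST(op) -/

/-- Core types of λ_AST(op). -/
inductive CTy : Type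
  | nat    : CTy
  | fn     : CTy → Eff → CTy → CTy
  | cont   : CTy → Eff → CTy → CTy
  | fparam : PreTy → CTy                          -- FParam(R)
  | astV   : PreTy → CTy                          -- AST(R)
  | astC   : PreTy → Eff → CTy                    -- AST(R ! ξ)
  | astH   : PreTy → Eff → PreTy → Eff → CTy      -- AST(Q!ξ₁ ⇒ R!ξ₂)

/-- Types of AST kind. -/
def CTy.isAST : CTy → Prop
  | .astV _ => True
  | .astC _ _ => True
  | .astH _ _ _ _ => True
  | _ => False

/-- Elaboration of level −1 types into core types. -/
def elabTy1 : Ty1 → CTy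
  | .nat => .nat
  | .fn S Δ T => .fn (elabTy1 S) Δ (elabTy1 T)
  | .cont S Δ T => .cont (elabTy1 S) Δ (elabTy1 T)
  | .code T ξ => .astC (eraseTy T) ξ

abbrev CTCtx := List CTy

mutual
  /-- Core typing of normal forms: `Γ ⊢ n : T`. -/
  inductive NTy : Sig → CTCtx → NF → CTy → Prop
    | var {Sg Γ i T} : Γ[i]? = some T → NTy Sg Γ (.var i) T
    | nat {Sg Γ m} : NTy Sg Γ (.nat m) .nat
    | lam {Sg Γ S T Δ t} :
        TTy Sg (S :: Γ) t T Δ → NTy Sg Γ (.lam t) (.fn S Δ T)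
    | kont {Sg Γ S T Δ t} :
        TTy Sg (S :: Γ) t T Δ → NTy Sg Γ (.kont t) (.cont S Δ T)
    | fp {Sg Γ a R} : NTy Sg Γ (.fp a R) (.fparam R)
    | astNat {Sg Γ m} : NTy Sg Γ (.astNat m) (.astV .nat)
    | astVar {Sg Γ n R} :
        NTy Sg Γ n (.fparam R) → NTy Sg Γ (.astVar n) (.astV R)
    | astLam {Sg Γ n₁ n₂ Q R ξ} :
        NTy Sg Γ n₁ (.fparam Q) → NTy Sg Γ n₂ (.astC R ξ) →
        NTy Sg Γ (.astLam n₁ n₂) (.astV (.fn Q ξ R))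
    | astApp {Sg Γ n₁ n₂ Q R ξ} :
        NTy Sg Γ n₁ (.astV (.fn Q ξ R)) → NTy Sg Γ n₂ (.astV Q) →
        NTy Sg Γ (.astApp n₁ n₂) (.astC R ξ)
    | astCont {Sg Γ n₁ n₂ Q R ξ} :
        NTy Sg Γ n₁ (.astV (.cont Q ξ R)) → NTy Sg Γ n₂ (.astV Q) →
        NTy Sg Γ (.astCont n₁ n₂) (.astC R ξ)
    | astRet {Sg Γ n R ξ} :
        NTy Sg Γ n (.astV R) → NTy Sg Γ (.astRet n) (.astC R ξ)
    | astDo {Sg Γ n₁ n₂ n₃ Q R ξ} :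
        NTy Sg Γ n₁ (.astC Q ξ) → NTy Sg Γ n₂ (.fparam Q) →
        NTy Sg Γ n₃ (.astC R ξ) →
        NTy Sg Γ (.astDo n₁ n₂ n₃) (.astC R ξ)
    | astOp {Sg Γ o n ξ} :
        NTy Sg Γ n (.astV (eraseTy (Sg.arg0 o))) → o ∈ ξ →
        NTy Sg Γ (.astOp o n) (.astC (eraseTy (Sg.res0 o)) ξ)
    | astHwith {Sg Γ n₁ n₂ Q R ξ₁ ξ₂} :
        NTy Sg Γ n₁ (.astC Q ξ₁) → NTy Sg Γ n₂ (.astH Q ξ₁ R ξ₂) →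
        NTy Sg Γ (.astHwith n₁ n₂) (.astC R ξ₂)
    | astHret {Sg Γ n₁ n₂ Q R ξ₁ ξ₂} :
        NTy Sg Γ n₁ (.fparam Q) → NTy Sg Γ n₂ (.astC R ξ₂) →
        NTy Sg Γ (.astHret n₁ n₂) (.astH Q ξ₁ R ξ₂)
    | astHop {Sg Γ n₁ o n₂ n₃ n₄ Q R ξ₁ ξ₂} :
        NTy Sg Γ n₁ (.astH Q ξ₁ R ξ₂) →
        NTy Sg Γ n₂ (.fparam (eraseTy (Sg.arg0 o))) →
        NTy Sg Γ n₃ (.fparam (.cont (eraseTy (Sg.res0 o)) ξ₂ R)) →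
        NTy Sg Γ n₄ (.astC R ξ₂) →
        ξ₁ ⊆ ξ₂ ∪ {o} →
        NTy Sg Γ (.astHop n₁ o n₂ n₃ n₄) (.astH Q ξ₁ R ξ₂)
  /-- Core typing of terms: `Γ ⊢ t : T ! Δ`. -/
  inductive TTy : Sig → CTCtx → Tm → CTy → Eff → Prop
    | app {Sg Γ S T Δ n₁ n₂} :
        NTy Sg Γ n₁ (.fn S Δ T) → NTy Sg Γ n₂ S → TTy Sg Γ (.app n₁ n₂) T Δ
    | resume {Sg Γ S T Δ n₁ n₂} :
        NTy Sg Γ n₁ (.cont S Δ T) → NTy Sg Γ n₂ S → TTy Sg Γ (.resume n₁ n₂) T Δ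
    | ret {Sg Γ T Δ n} : NTy Sg Γ n T → TTy Sg Γ (.ret n) T Δ
    | seq {Sg Γ S T Δ t₁ t₂} :
        TTy Sg Γ t₁ S Δ → TTy Sg (S :: Γ) t₂ T Δ → TTy Sg Γ (.seq t₁ t₂) T Δ
    | op {Sg Γ Δ o n} :
        NTy Sg Γ n (elabTy1 (Sg.arg1 o)) → o ∈ Δ →
        TTy Sg Γ (.op o n) (elabTy1 (Sg.res1 o)) Δ
    | handle {Sg Γ S T Δ₁ Δ₂ t h} :
        TTy Sg Γ t S Δ₁ → HTy Sg Γ h S Δ₁ T Δ₂ →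
        (∀ o ∈ Δ₁, o ∉ Δ₂ → o ∈ h.dom) →
        TTy Sg Γ (.handle t h) T Δ₂
    | check {Sg Γ T Δ n} :
        NTy Sg Γ n T → T.isAST → TTy Sg Γ (.check n) T Δ
    | checkM {Sg Γ T Δ n} :
        NTy Sg Γ n T → T.isAST → TTy Sg Γ (.checkM n) T Δ
    | mkvar {Sg Γ R Δ} : TTy Sg Γ (.mkvar R) (.fparam R) Δ
    | dlet {Sg Γ T Δ R n t} :
        NTy Sg Γ n (.fparam R) → TTy Sg Γ t T Δ → TTy Sg Γ (.dlet n t) T Δ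
    | tls {Sg Γ T Δ t} : TTy Sg Γ t T Δ → TTy Sg Γ (.tls t) T Δ
    | err {Sg Γ T Δ} : TTy Sg Γ .err T Δ
  /-- Core typing of handlers: `Γ ⊢ h : S!Δ₁ ⇒ T!Δ₂`. -/
  inductive HTy : Sig → CTCtx → Hd → CTy → Eff → CTy → Eff → Prop
    | retH {Sg Γ S T Δ₁ Δ₂ t} :
        TTy Sg (S :: Γ) t T Δ₂ → HTy Sg Γ (.retH t) S Δ₁ T Δ₂
    | opH {Sg Γ S T Δ₁ Δ₂ o h t} :
        HTy Sg Γ h S Δ₁ T Δ₂ →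
        TTy Sg (CTy.cont (elabTy1 (Sg.res1 o)) Δ₂ T :: elabTy1 (Sg.arg1 o) :: Γ) t T Δ₂ →
        Δ₁ ⊆ Δ₂ ∪ {o} →
        o ∉ h.dom →
        HTy Sg Γ (.opH h o t) S Δ₁ T Δ₂
end

/-! ### Typing of λ_op-quote -/

/-- `dom` of a source handler. -/
def SHandler.dom : SHandler → Eff
  | .retH _ _ => ∅
  | .opH h o _ _ _ => insert o h.dom


/-- Typing context entries: level 0 or level −1 variables. -/
inductive SEntry : Type
  | lvl0 : Ty0 → SEntry
  | lvl1 : Ty1 → SEntry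

abbrev SCtx := List SEntry

mutual
  /-- `Γ ⊢_{c|q} v : T⁰ ! Δ` (c- and q-mode value typing coincide). -/
  inductive QVal : Sig → SCtx → SVal → Ty0 → Eff → Prop
    | var {Sg Γ i T Δ} : Γ[i]? = some (.lvl0 T) → QVal Sg Γ (.var i) T Δ
    | nat {Sg Γ m Δ} : QVal Sg Γ (.nat m) .nat Δ
    | lam {Sg Γ S T Δ ξ e} :
        QExpr Sg (SEntry.lvl0 S :: Γ) e T Δ ξ →
        QVal Sg Γ (.lam S e) (.fn S ξ T) Δ
  /-- `Γ ⊢_{c|q} e : T⁰ ! Δ;ξ`. -/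
  inductive QExpr : Sig → SCtx → SExpr → Ty0 → Eff → Eff → Prop
    | app {Sg Γ S T Δ ξ v₁ v₂} :
        QVal Sg Γ v₁ (.fn S ξ T) Δ → QVal Sg Γ v₂ S Δ →
        QExpr Sg Γ (.app v₁ v₂) T Δ ξ
    | resume {Sg Γ S T Δ ξ v₁ v₂} :
        QVal Sg Γ v₁ (.cont S ξ T) Δ → QVal Sg Γ v₂ S Δ →
        QExpr Sg Γ (.resume v₁ v₂) T Δ ξ
    | ret {Sg Γ T Δ ξ v} : QVal Sg Γ v T Δ → QExpr Sg Γ (.ret v) T Δ ξ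
    | seq {Sg Γ S T Δ ξ e₁ e₂} :
        QExpr Sg Γ e₁ S Δ ξ → QExpr Sg (SEntry.lvl0 S :: Γ) e₂ T Δ ξ →
        QExpr Sg Γ (.seq S e₁ e₂) T Δ ξ
    | op {Sg Γ Δ ξ o v} :
        QVal Sg Γ v (Sg.arg0 o) Δ → o ∈ ξ →
        QExpr Sg Γ (.op o v) (Sg.res0 o) Δ ξ
    | handle {Sg Γ S T Δ ξ₁ ξ₂ e h} :
        QExpr Sg Γ e S Δ ξ₁ → QHdl Sg Γ h S ξ₁ T ξ₂ Δ →
        (∀ o ∈ ξ₁, o ∉ ξ₂ → o ∈ h.dom) →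
        QExpr Sg Γ (.handle e h) T Δ ξ₂
    | splice {Sg Γ T Δ ξ e} :
        SExprT Sg Γ e (.code T ξ) Δ →
        QExpr Sg Γ (.splice e) T Δ ξ
  /-- `Γ ⊢_{c|q} h : (S!ξ₁ ⇒ T!ξ₂)⁰ ! Δ`. -/
  inductive QHdl : Sig → SCtx → SHandler → Ty0 → Eff → Ty0 → Eff → Eff → Prop
    | retH {Sg Γ S T ξ₁ ξ₂ Δ e} :
        QExpr Sg (SEntry.lvl0 S :: Γ) e T Δ ξ₂ →
        QHdl Sg Γ (.retH S e) S ξ₁ T ξ₂ Δ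
    | opH {Sg Γ S T ξ₁ ξ₂ Δ o h e} :
        QHdl Sg Γ h S ξ₁ T ξ₂ Δ →
        QExpr Sg (SEntry.lvl0 (Ty0.cont (Sg.res0 o) ξ₂ T) :: SEntry.lvl0 (Sg.arg0 o) :: Γ)
          e T Δ ξ₂ →
        ξ₁ ⊆ ξ₂ ∪ {o} →
        QHdl Sg Γ (.opH h o (Sg.arg0 o) (Ty0.cont (Sg.res0 o) ξ₂ T) e) S ξ₁ T ξ₂ Δ
  /-- `Γ ⊢_s v : T⁻¹`. -/
  inductive SValT : Sig → SCtx → SVal → Ty1 → Prop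
    | var {Sg Γ i T} : Γ[i]? = some (.lvl1 T) → SValT Sg Γ (.var i) T
    | nat {Sg Γ m} : SValT Sg Γ (.nat m) .nat
    | lam {Sg Γ A S T Δ e} :
        SExprT Sg (SEntry.lvl1 S :: Γ) e T Δ →
        SValT Sg Γ (.lam A e) (.fn S Δ T)
  /-- `Γ ⊢_s e : T⁻¹ ! Δ`. -/
  inductive SExprT : Sig → SCtx → SExpr → Ty1 → Eff → Prop
    | app {Sg Γ S T Δ v₁ v₂} :
        SValT Sg Γ v₁ (.fn S Δ T) → SValT Sg Γ v₂ S →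
        SExprT Sg Γ (.app v₁ v₂) T Δ
    | resume {Sg Γ S T Δ v₁ v₂} :
        SValT Sg Γ v₁ (.cont S Δ T) → SValT Sg Γ v₂ S →
        SExprT Sg Γ (.resume v₁ v₂) T Δ
    | ret {Sg Γ T Δ v} : SValT Sg Γ v T → SExprT Sg Γ (.ret v) T Δ
    | seq {Sg Γ A S T Δ e₁ e₂} :
        SExprT Sg Γ e₁ S Δ → SExprT Sg (SEntry.lvl1 S :: Γ) e₂ T Δ →
        SExprT Sg Γ (.seq A e₁ e₂) T Δ
    | op {Sg Γ Δ o v} :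
        SValT Sg Γ v (Sg.arg1 o) → o ∈ Δ →
        SExprT Sg Γ (.op o v) (Sg.res1 o) Δ
    | handle {Sg Γ S T Δ₁ Δ₂ e h} :
        SExprT Sg Γ e S Δ₁ → SHdlT Sg Γ h S Δ₁ T Δ₂ →
        (∀ o ∈ Δ₁, o ∉ Δ₂ → o ∈ h.dom) →
        SExprT Sg Γ (.handle e h) T Δ₂
    | quote {Sg Γ T Δ ξ e} :
        QExpr Sg Γ e T Δ ξ →
        SExprT Sg Γ (.quote e) (.code T ξ) Δ
  /-- `Γ ⊢_s h : (S!Δ₁ ⇒ T!Δ₂)⁻¹`. -/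
  inductive SHdlT : Sig → SCtx → SHandler → Ty1 → Eff → Ty1 → Eff → Prop
    | retH {Sg Γ A S T Δ₁ Δ₂ e} :
        SExprT Sg (SEntry.lvl1 S :: Γ) e T Δ₂ →
        SHdlT Sg Γ (.retH A e) S Δ₁ T Δ₂
    | opH {Sg Γ A B S T Δ₁ Δ₂ o h e} :
        SHdlT Sg Γ h S Δ₁ T Δ₂ →
        SExprT Sg (SEntry.lvl1 (Ty1.cont (Sg.res1 o) Δ₂ T) :: SEntry.lvl1 (Sg.arg1 o) :: Γ)
          e T Δ₂ →
        Δ₁ ⊆ Δ₂ ∪ {o} →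
        SHdlT Sg Γ (.opH h o A B e) S Δ₁ T Δ₂
end

/-- Elaboration of context entries. -/
def elabEntry : SEntry → CTy
  | .lvl0 T => .fparam (eraseTy T)
  | .lvl1 T => elabTy1 T

/-- Elaboration of typing contexts. -/
def elabCtx (Γ : SCtx) : CTCtx := Γ.map elabEntry

end MetaLang

namespace MetaLang

/-! ### Elaboration from λ_op-quote to λ_AST(op)

The elaboration is parameterised by a *flavor*: the naïve elaboration (no
checks), the lazy check, the eager check, and the C4C (Cause-for-Concern)
check, which differ only in where `check`/`checkM`/`dlet` are inserted. -/

inductive Flavor : Type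
  | naive | lazy | eager | be
deriving DecidableEq

/-- How an AST construction in q-mode is returned. -/
def qWrap : Flavor → NF → Tm
  | .naive, n => .ret n
  | .lazy, n => .ret n
  | .eager, n => .check n
  | .be, n => .checkM n

/-- How an AST construction is returned (c-mode constructions are plain). -/
def wrapC (isC : Bool) (fl : Flavor) (n : NF) : Tm :=
  if isC then .ret n else qWrap fl n

def dlets (xs : List ℕ) (t : Tm) : Tm :=
  xs.foldr (fun i s => Tm.dlet (.var i) s) t

/-- The treatment of binders: the naïve elaboration inserts nothing; the lazy
check inserts `dlet`s at c-mode binders; the eager and C4C checks additionally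
insert `dlet`s followed by a `check` (resp. `checkM`) at q-mode binders. -/
def dletWrap (isC : Bool) (fl : Flavor) (xs : List ℕ) (t : Tm) : Tm :=
  if isC then
    match fl with
    | .naive => t
    | _ => dlets xs t
  else
    match fl with
    | .naive => t
    | .lazy => t
    | .eager => .seq (dlets xs t) (.check (.var 0))
    | .be => .seq (dlets xs t) (.checkM (.var 0))

/-- The treatment of top-level splices: the lazy and eager checks `check` the
result of the top-level splice, the C4C check `checkM`s it. -/
def topWrap (fl : Flavor) (t : Tm) : Tm :=
  match fl with
  | .naive => t
  | .lazy => .seq t (.check (.var 0))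
  | .eager => .seq t (.check (.var 0))
  | .be => .seq t (.checkM (.var 0))

mutual
  /-- Elaboration of values in c-mode (`isC = true`) or q-mode (`isC = false`). -/
  def elabV (fl : Flavor) (isC : Bool) : SVal → Tm
    | .var i => wrapC isC fl (.astVar (.var i))
    | .nat m => wrapC isC fl (.astNat m)
    | .lam T e =>
        .seq (.mkvar (eraseTy T))
          (dletWrap isC fl [0]
            (.seq (elabE fl isC e) (.ret (.astLam (.var 1) (.var 0)))))
  /-- Elaboration of expressions in c-mode or q-mode. -/
  def elabE (fl : Flavor) (isC : Bool) : SExpr → Tm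
    | .app v₁ v₂ =>
        .seq (elabV fl isC v₁)
          (.seq ((elabV fl isC v₂).rename Nat.succ)
            (wrapC isC fl (.astApp (.var 1) (.var 0))))
    | .ret v => .seq (elabV fl isC v) (wrapC isC fl (.astRet (.var 0)))
    | .seq T e₁ e₂ =>
        .seq (elabE fl isC e₁)
          (.seq (.mkvar (eraseTy T))
            (dletWrap isC fl [0]
              (.seq ((elabE fl isC e₂).rename (liftR Nat.succ))
                (.ret (.astDo (.var 2) (.var 1) (.var 0))))))
    | .op o v => .seq (elabV fl isC v) (wrapC isC fl (.astOp o (.var 0)))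
    | .handle e h =>
        .seq (elabE fl isC e)
          (.seq ((elabH fl isC h).rename Nat.succ)
            (wrapC isC fl (.astHwith (.var 1) (.var 0))))
    | .resume v₁ v₂ =>
        .seq (elabV fl isC v₁)
          (.seq ((elabV fl isC v₂).rename Nat.succ)
            (wrapC isC fl (.astCont (.var 1) (.var 0))))
    | .quote e => elabE fl isC e          -- (quotes are ill-typed in c/q-mode)
    | .splice e => if isC then topWrap fl (.tls (elabEs fl e)) else elabEs fl e
  /-- Elaboration of handlers in c-mode or q-mode. -/
  def elabH (fl : Flavor) (isC : Bool) : SHandler → Tm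
    | .retH T e =>
        .seq (.mkvar (eraseTy T))
          (dletWrap isC fl [0]
            (.seq (elabE fl isC e) (.ret (.astHret (.var 1) (.var 0)))))
    | .opH h o Tx Tk e =>
        .seq (elabH fl isC h)
          (.seq (.mkvar (eraseTy Tx))
            (.seq ((.mkvar (eraseTy Tk) : Tm).rename Nat.succ)
              (dletWrap isC fl [1, 0]
                (.seq ((elabE fl isC e).rename (liftR (liftR Nat.succ)))
                  (.ret (.astHop (.var 3) o (.var 2) (.var 1) (.var 0)))))))
  /-- Elaboration of values in s-mode (essentially the identity). -/
  def elabVs (fl : Flavor) : SVal → NF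
    | .var i => .var i
    | .nat m => .nat m
    | .lam _ e => .lam (elabEs fl e)
  /-- Elaboration of expressions in s-mode. -/
  def elabEs (fl : Flavor) : SExpr → Tm
    | .app v₁ v₂ => .app (elabVs fl v₁) (elabVs fl v₂)
    | .ret v => .ret (elabVs fl v)
    | .seq _ e₁ e₂ => .seq (elabEs fl e₁) (elabEs fl e₂)
    | .op o v => .op o (elabVs fl v)
    | .handle e h => .handle (elabEs fl e) (elabHs fl h)
    | .resume v₁ v₂ => .resume (elabVs fl v₁) (elabVs fl v₂)
    | .quote e => elabE fl false e
    | .splice e => elabEs fl e            -- (splices are ill-typed in s-mode)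
  /-- Elaboration of handlers in s-mode. -/
  def elabHs (fl : Flavor) : SHandler → Hd
    | .retH _ e => .retH (elabEs fl e)
    | .opH h o _ _ e => .opH (elabHs fl h) o (elabEs fl e)
end

/-- The naïve elaboration `⟦e⟧` of a (c-mode) λ_op-quote expression. -/
def elabNaive (e : SExpr) : Tm := elabE .naive true e
/-- The lazy-check elaboration `⟦e⟧^Lazy`. -/
def elabLazy (e : SExpr) : Tm := elabE .lazy true e
/-- The eager-check elaboration `⟦e⟧^Eager`. -/
def elabEager (e : SExpr) : Tm := elabE .eager true e
/-- The C4C-check elaboration `⟦e⟧^BE`. -/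
def elabBE (e : SExpr) : Tm := elabE .be true e

/-- A closed, well-typed λ_op-quote expression: it types in compile mode with
empty compile-time and run-time effect sets. -/
def SWellTyped (Sg : Sig) (e : SExpr) : Prop :=
  ∃ T : Ty0, QExpr Sg [] e T ∅ ∅

/-- `Safe`: closed well-typed expressions whose lazy-check elaboration never
reduces to `err`. -/
def Safe (Sg : Sig) (e : SExpr) : Prop :=
  SWellTyped Sg e ∧ ¬ ReachesErr (elabLazy e)

end MetaLang

namespace MetaLang

section Preservation

/-! #### Weakening (appending to the tail of the context) -/

private theorem getElem?_append_some {α : Type _} {l l' : List α} {i : ℕ} {T : α}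
    (h : l[i]? = some T) : (l ++ l')[i]? = some T := by
  rw [List.getElem?_append_left (List.getElem?_eq_some_iff.mp h).1]; exact h

mutual
theorem weakenN {Sg} : ∀ {Γ n T}, NTy Sg Γ n T → ∀ (Γ' : CTCtx), NTy Sg (Γ ++ Γ') n T
  | _, _, _, .var h, _ => .var (getElem?_append_some h)
  | _, _, _, .nat, _ => .nat
  | _, _, _, .lam h, Γ' => .lam (weakenT h Γ')
  | _, _, _, .kont h, Γ' => .kont (weakenT h Γ')
  | _, _, _, .fp, _ => .fp
  | _, _, _, .astNat, _ => .astNat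
  | _, _, _, .astVar h, Γ' => .astVar (weakenN h Γ')
  | _, _, _, .astLam h1 h2, Γ' => .astLam (weakenN h1 Γ') (weakenN h2 Γ')
  | _, _, _, .astApp h1 h2, Γ' => .astApp (weakenN h1 Γ') (weakenN h2 Γ')
  | _, _, _, .astCont h1 h2, Γ' => .astCont (weakenN h1 Γ') (weakenN h2 Γ')
  | _, _, _, .astRet h, Γ' => .astRet (weakenN h Γ')
  | _, _, _, .astDo h1 h2 h3, Γ' => .astDo (weakenN h1 Γ') (weakenN h2 Γ') (weakenN h3 Γ')
  | _, _, _, .astOp h ho, Γ' => .astOp (weakenN h Γ') ho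
  | _, _, _, .astHwith h1 h2, Γ' => .astHwith (weakenN h1 Γ') (weakenN h2 Γ')
  | _, _, _, .astHret h1 h2, Γ' => .astHret (weakenN h1 Γ') (weakenN h2 Γ')
  | _, _, _, .astHop h1 h2 h3 h4 hs, Γ' =>
      .astHop (weakenN h1 Γ') (weakenN h2 Γ') (weakenN h3 Γ') (weakenN h4 Γ') hs

theorem weakenT {Sg} : ∀ {Γ t T Δ}, TTy Sg Γ t T Δ → ∀ (Γ' : CTCtx), TTy Sg (Γ ++ Γ') t T Δ
  | _, _, _, _, .app h1 h2, Γ' => .app (weakenN h1 Γ') (weakenN h2 Γ')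
  | _, _, _, _, .resume h1 h2, Γ' => .resume (weakenN h1 Γ') (weakenN h2 Γ')
  | _, _, _, _, .ret h, Γ' => .ret (weakenN h Γ')
  | _, _, _, _, .seq h1 h2, Γ' => .seq (weakenT h1 Γ') (weakenT h2 Γ')
  | _, _, _, _, .op h ho, Γ' => .op (weakenN h Γ') ho
  | _, _, _, _, .handle h1 h2 hc, Γ' => .handle (weakenT h1 Γ') (weakenH h2 Γ') hc
  | _, _, _, _, .check h hA, Γ' => .check (weakenN h Γ') hA
  | _, _, _, _, .checkM h hA, Γ' => .checkM (weakenN h Γ') hA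
  | _, _, _, _, .mkvar, _ => .mkvar
  | _, _, _, _, .dlet h1 h2, Γ' => .dlet (weakenN h1 Γ') (weakenT h2 Γ')
  | _, _, _, _, .tls h, Γ' => .tls (weakenT h Γ')
  | _, _, _, _, .err, _ => .err

theorem weakenH {Sg} : ∀ {Γ h S Δ₁ T Δ₂}, HTy Sg Γ h S Δ₁ T Δ₂ →
    ∀ (Γ' : CTCtx), HTy Sg (Γ ++ Γ') h S Δ₁ T Δ₂
  | _, _, _, _, _, _, .retH h, Γ' => .retH (weakenT h Γ')
  | _, _, _, _, _, _, .opH hh ht hs hd, Γ' => .opH (weakenH hh Γ') (weakenT ht Γ') hs hd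
end

/-! #### Renaming -/

def GoodR (Γ Γ' : CTCtx) (f : ℕ → ℕ) : Prop :=
  ∀ i T, Γ[i]? = some T → Γ'[f i]? = some T

theorem GoodR.lift {Γ Γ' f} (g : GoodR Γ Γ' f) (S : CTy) :
    GoodR (S :: Γ) (S :: Γ') (liftR f) := by
  intro i T h
  cases i with
  | zero =>
      simp only [List.getElem?_cons_zero, Option.some.injEq] at h
      subst h; simp [liftR]
  | succ i =>
      simp only [List.getElem?_cons_succ] at h
      simpa [liftR] using g i T h

theorem goodR_succ {Γ : CTCtx} {S : CTy} : GoodR Γ (S :: Γ) Nat.succ :=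
  fun i T h => by simpa using h

theorem dom_rename : ∀ {h : Hd} {f}, (h.rename f).dom = h.dom
  | .retH _, _ => by simp [Hd.rename, Hd.dom]
  | .opH h o t, f => by simp [Hd.rename, Hd.dom, dom_rename (h := h) (f := f)]

mutual
theorem renameN {Sg} : ∀ {Γ n T}, NTy Sg Γ n T → ∀ {Γ' f}, GoodR Γ Γ' f →
    NTy Sg Γ' (n.rename f) T
  | _, _, _, .var h, _, _, g => by simpa only [NF.rename] using NTy.var (g _ _ h)
  | _, _, _, .nat, _, _, _ => by simpa only [NF.rename] using NTy.nat
  | _, _, _, .lam h, _, _, g => by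
      simp only [NF.rename]; exact .lam (renameT h (g.lift _))
  | _, _, _, .kont h, _, _, g => by
      simp only [NF.rename]; exact .kont (renameT h (g.lift _))
  | _, _, _, .fp, _, _, _ => by simpa only [NF.rename] using NTy.fp
  | _, _, _, .astNat, _, _, _ => by simpa only [NF.rename] using NTy.astNat
  | _, _, _, .astVar h, _, _, g => by
      simp only [NF.rename]; exact .astVar (renameN h g)
  | _, _, _, .astLam h1 h2, _, _, g => by
      simp only [NF.rename]; exact .astLam (renameN h1 g) (renameN h2 g)
  | _, _, _, .astApp h1 h2, _, _, g => by
      simp only [NF.rename]; exact .astApp (renameN h1 g) (renameN h2 g)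
  | _, _, _, .astCont h1 h2, _, _, g => by
      simp only [NF.rename]; exact .astCont (renameN h1 g) (renameN h2 g)
  | _, _, _, .astRet h, _, _, g => by
      simp only [NF.rename]; exact .astRet (renameN h g)
  | _, _, _, .astDo h1 h2 h3, _, _, g => by
      simp only [NF.rename]; exact .astDo (renameN h1 g) (renameN h2 g) (renameN h3 g)
  | _, _, _, .astOp h ho, _, _, g => by
      simp only [NF.rename]; exact .astOp (renameN h g) ho
  | _, _, _, .astHwith h1 h2, _, _, g => by
      simp only [NF.rename]; exact .astHwith (renameN h1 g) (renameN h2 g)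
  | _, _, _, .astHret h1 h2, _, _, g => by
      simp only [NF.rename]; exact .astHret (renameN h1 g) (renameN h2 g)
  | _, _, _, .astHop h1 h2 h3 h4 hs, _, _, g => by
      simp only [NF.rename]
      exact .astHop (renameN h1 g) (renameN h2 g) (renameN h3 g) (renameN h4 g) hs

theorem renameT {Sg} : ∀ {Γ t T Δ}, TTy Sg Γ t T Δ → ∀ {Γ' f}, GoodR Γ Γ' f →
    TTy Sg Γ' (t.rename f) T Δ
  | _, _, _, _, .app h1 h2, _, _, g => by
      simp only [Tm.rename]; exact .app (renameN h1 g) (renameN h2 g)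
  | _, _, _, _, .resume h1 h2, _, _, g => by
      simp only [Tm.rename]; exact .resume (renameN h1 g) (renameN h2 g)
  | _, _, _, _, .ret h, _, _, g => by
      simp only [Tm.rename]; exact .ret (renameN h g)
  | _, _, _, _, .seq h1 h2, _, _, g => by
      simp only [Tm.rename]; exact .seq (renameT h1 g) (renameT h2 (g.lift _))
  | _, _, _, _, .op h ho, _, _, g => by
      simp only [Tm.rename]; exact .op (renameN h g) ho
  | _, _, _, _, .handle h1 h2 hc, _, _, g => by
      simp only [Tm.rename]; exact .handle (renameT h1 g) (renameH h2 g) (by rwa [dom_rename])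
  | _, _, _, _, .check h hA, _, _, g => by
      simp only [Tm.rename]; exact .check (renameN h g) hA
  | _, _, _, _, .checkM h hA, _, _, g => by
      simp only [Tm.rename]; exact .checkM (renameN h g) hA
  | _, _, _, _, .mkvar, _, _, _ => by simpa only [Tm.rename] using TTy.mkvar
  | _, _, _, _, .dlet h1 h2, _, _, g => by
      simp only [Tm.rename]; exact .dlet (renameN h1 g) (renameT h2 g)
  | _, _, _, _, .tls h, _, _, g => by
      simp only [Tm.rename]; exact .tls (renameT h g)
  | _, _, _, _, .err, _, _, _ => by simpa only [Tm.rename] using TTy.err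

theorem renameH {Sg} : ∀ {Γ h S Δ₁ T Δ₂}, HTy Sg Γ h S Δ₁ T Δ₂ → ∀ {Γ' f}, GoodR Γ Γ' f →
    HTy Sg Γ' (h.rename f) S Δ₁ T Δ₂
  | _, _, _, _, _, _, .retH h, _, _, g => by
      simp only [Hd.rename]; exact .retH (renameT h (g.lift _))
  | _, _, _, _, _, _, .opH hh ht hs hd, _, _, g => by
      simp only [Hd.rename]
      exact .opH (renameH hh g) (renameT ht ((g.lift _).lift _)) hs (by rwa [dom_rename])
end

end Preservation

end MetaLang
namespace MetaLang
section Preservation2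

/-! #### Substitution -/

def GoodS (Sg : Sig) (Γ Γ' : CTCtx) (σ : ℕ → NF) : Prop :=
  ∀ i T, Γ[i]? = some T → NTy Sg Γ' (σ i) T

theorem GoodS.lift {Sg Γ Γ' σ} (g : GoodS Sg Γ Γ' σ) (S : CTy) :
    GoodS Sg (S :: Γ) (S :: Γ') (liftS σ) := by
  intro i T h
  cases i with
  | zero =>
      simp only [List.getElem?_cons_zero, Option.some.injEq] at h
      subst h
      exact .var (by simp [liftS])
  | succ i =>
      simp only [List.getElem?_cons_succ] at h
      simpa [liftS] using renameN (g i T h) goodR_succ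

theorem dom_subst : ∀ {h : Hd} {σ}, (h.subst σ).dom = h.dom
  | .retH _, _ => by simp [Hd.subst, Hd.dom]
  | .opH h o t, σ => by simp [Hd.subst, Hd.dom, dom_subst (h := h) (σ := σ)]

mutual
theorem substN {Sg} : ∀ {Γ n T}, NTy Sg Γ n T → ∀ {Γ' σ}, GoodS Sg Γ Γ' σ →
    NTy Sg Γ' (n.subst σ) T
  | _, _, _, .var h, _, _, g => by simpa only [NF.subst] using g _ _ h
  | _, _, _, .nat, _, _, _ => by simpa only [NF.subst] using NTy.nat
  | _, _, _, .lam h, _, _, g => by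
      simp only [NF.subst]; exact .lam (substT h (g.lift _))
  | _, _, _, .kont h, _, _, g => by
      simp only [NF.subst]; exact .kont (substT h (g.lift _))
  | _, _, _, .fp, _, _, _ => by simpa only [NF.subst] using NTy.fp
  | _, _, _, .astNat, _, _, _ => by simpa only [NF.subst] using NTy.astNat
  | _, _, _, .astVar h, _, _, g => by
      simp only [NF.subst]; exact .astVar (substN h g)
  | _, _, _, .astLam h1 h2, _, _, g => by
      simp only [NF.subst]; exact .astLam (substN h1 g) (substN h2 g)
  | _, _, _, .astApp h1 h2, _, _, g => by
      simp only [NF.subst]; exact .astApp (substN h1 g) (substN h2 g)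
  | _, _, _, .astCont h1 h2, _, _, g => by
      simp only [NF.subst]; exact .astCont (substN h1 g) (substN h2 g)
  | _, _, _, .astRet h, _, _, g => by
      simp only [NF.subst]; exact .astRet (substN h g)
  | _, _, _, .astDo h1 h2 h3, _, _, g => by
      simp only [NF.subst]; exact .astDo (substN h1 g) (substN h2 g) (substN h3 g)
  | _, _, _, .astOp h ho, _, _, g => by
      simp only [NF.subst]; exact .astOp (substN h g) ho
  | _, _, _, .astHwith h1 h2, _, _, g => by
      simp only [NF.subst]; exact .astHwith (substN h1 g) (substN h2 g)
  | _, _, _, .astHret h1 h2, _, _, g => by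
      simp only [NF.subst]; exact .astHret (substN h1 g) (substN h2 g)
  | _, _, _, .astHop h1 h2 h3 h4 hs, _, _, g => by
      simp only [NF.subst]
      exact .astHop (substN h1 g) (substN h2 g) (substN h3 g) (substN h4 g) hs

theorem substT {Sg} : ∀ {Γ t T Δ}, TTy Sg Γ t T Δ → ∀ {Γ' σ}, GoodS Sg Γ Γ' σ →
    TTy Sg Γ' (t.subst σ) T Δ
  | _, _, _, _, .app h1 h2, _, _, g => by
      simp only [Tm.subst]; exact .app (substN h1 g) (substN h2 g)
  | _, _, _, _, .resume h1 h2, _, _, g => by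
      simp only [Tm.subst]; exact .resume (substN h1 g) (substN h2 g)
  | _, _, _, _, .ret h, _, _, g => by
      simp only [Tm.subst]; exact .ret (substN h g)
  | _, _, _, _, .seq h1 h2, _, _, g => by
      simp only [Tm.subst]; exact .seq (substT h1 g) (substT h2 (g.lift _))
  | _, _, _, _, .op h ho, _, _, g => by
      simp only [Tm.subst]; exact .op (substN h g) ho
  | _, _, _, _, .handle h1 h2 hc, _, _, g => by
      simp only [Tm.subst]
      exact .handle (substT h1 g) (substH h2 g) (by rwa [dom_subst])
  | _, _, _, _, .check h hA, _, _, g => by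
      simp only [Tm.subst]; exact .check (substN h g) hA
  | _, _, _, _, .checkM h hA, _, _, g => by
      simp only [Tm.subst]; exact .checkM (substN h g) hA
  | _, _, _, _, .mkvar, _, _, _ => by simpa only [Tm.subst] using TTy.mkvar
  | _, _, _, _, .dlet h1 h2, _, _, g => by
      simp only [Tm.subst]; exact .dlet (substN h1 g) (substT h2 g)
  | _, _, _, _, .tls h, _, _, g => by
      simp only [Tm.subst]; exact .tls (substT h g)
  | _, _, _, _, .err, _, _, _ => by simpa only [Tm.subst] using TTy.err

theorem substH {Sg} : ∀ {Γ h S Δ₁ T Δ₂}, HTy Sg Γ h S Δ₁ T Δ₂ → ∀ {Γ' σ}, GoodS Sg Γ Γ' σ →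
    HTy Sg Γ' (h.subst σ) S Δ₁ T Δ₂
  | _, _, _, _, _, _, .retH h, _, _, g => by
      simp only [Hd.subst]; exact .retH (substT h (g.lift _))
  | _, _, _, _, _, _, .opH hh ht hs hd, _, _, g => by
      simp only [Hd.subst]
      exact .opH (substH hh g) (substT ht ((g.lift _).lift _)) hs (by rwa [dom_subst])
end

theorem subst1_ty {Sg S t T Δ n} (ht : TTy Sg [S] t T Δ) (hn : NTy Sg [] n S) :
    TTy Sg [] (t.subst1 n) T Δ := by
  refine substT ht ?_
  intro i T' h
  cases i with
  | zero =>
      simp only [List.getElem?_cons_zero, Option.some.injEq] at h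
      subst h; exact hn
  | succ i => simp at h

theorem subst2_ty {Sg S₁ S₂ t T Δ n₁ n₂} (ht : TTy Sg [S₁, S₂] t T Δ)
    (h1 : NTy Sg [] n₁ S₁) (h2 : NTy Sg [] n₂ S₂) :
    TTy Sg [] (t.subst2 n₁ n₂) T Δ := by
  refine substT ht ?_
  intro i T' h
  match i with
  | 0 =>
      simp only [List.getElem?_cons_zero, Option.some.injEq] at h
      subst h; exact h1
  | 1 =>
      simp only [List.getElem?_cons_succ, List.getElem?_cons_zero,
        Option.some.injEq] at h
      subst h; exact h2
  | (i+2) => simp at h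

end Preservation2
end MetaLang
namespace MetaLang
section Preservation3

/-! #### Typing of evaluation contexts -/

inductive ECtxTy (Sg : Sig) (Γ : CTCtx) : CCtx → CTy → Eff → CTy → Eff → Prop
  | nil {T Δ} : ECtxTy Sg Γ [] T Δ T Δ
  | seqF {S T' Δ' T Δ t₂ E} : TTy Sg (S :: Γ) t₂ T' Δ' → ECtxTy Sg Γ E T' Δ' T Δ →
      ECtxTy Sg Γ (.seqF t₂ :: E) S Δ' T Δ
  | handleF {S Δ₁ T' Δ₂ T Δ h E} : HTy Sg Γ h S Δ₁ T' Δ₂ →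
      (∀ o ∈ Δ₁, o ∉ Δ₂ → o ∈ Hd.dom h) → ECtxTy Sg Γ E T' Δ₂ T Δ →
      ECtxTy Sg Γ (.handleF h :: E) S Δ₁ T Δ
  | dletF {a R S Δ' T Δ E} : ECtxTy Sg Γ E S Δ' T Δ →
      ECtxTy Sg Γ (.dletF a R :: E) S Δ' T Δ
  | tlsF {S Δ' T Δ E} : ECtxTy Sg Γ E S Δ' T Δ → ECtxTy Sg Γ (.tlsF :: E) S Δ' T Δ

theorem ECtxTy.weaken {Sg Γ E S Δ' T Δ} (h : ECtxTy Sg Γ E S Δ' T Δ) (Γ' : CTCtx) :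
    ECtxTy Sg (Γ ++ Γ') E S Δ' T Δ := by
  induction h with
  | nil => exact .nil
  | seqF h1 _ ih => exact .seqF (weakenT h1 Γ') ih
  | handleF h1 hc _ ih => exact .handleF (weakenH h1 Γ') hc ih
  | dletF _ ih => exact .dletF ih
  | tlsF _ ih => exact .tlsF ih

theorem plug_intro {Sg Γ E S Δ' T Δ} {t : Tm} (ht : TTy Sg Γ t S Δ')
    (hE : ECtxTy Sg Γ E S Δ' T Δ) : TTy Sg Γ (plugC E t) T Δ := by
  induction hE generalizing t with
  | nil => exact ht
  | seqF h1 _ ih => exact ih (.seq ht h1)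
  | handleF h1 hc _ ih => exact ih (.handle ht h1 hc)
  | dletF _ ih => exact ih (.dlet .fp ht)
  | tlsF _ ih => exact ih (.tls ht)

theorem plug_elim {Sg Γ T Δ} : ∀ {E : CCtx} {t : Tm}, TTy Sg Γ (plugC E t) T Δ →
    ∃ S Δ', TTy Sg Γ t S Δ' ∧ ECtxTy Sg Γ E S Δ' T Δ := by
  intro E
  induction E with
  | nil => exact fun h => ⟨T, Δ, h, .nil⟩
  | cons F E ih =>
      intro t h
      obtain ⟨S, Δ', hF, hE⟩ := ih (t := plugCF F t) h
      cases F with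
      | seqF t₂ =>
          cases hF with
          | seq h1 h2 => exact ⟨_, _, h1, .seqF h2 hE⟩
      | handleF hd =>
          cases hF with
          | handle h1 h2 hc => exact ⟨_, _, h1, .handleF h2 hc hE⟩
      | dletF a R =>
          cases hF with
          | dlet _ h2 => exact ⟨_, _, h2, .dletF hE⟩
      | tlsF =>
          cases hF with
          | tls h1 => exact ⟨_, _, h1, .tlsF hE⟩

theorem plugC_append : ∀ (E₂ E₁ : CCtx) (t : Tm),
    plugC (E₂ ++ E₁) t = plugC E₁ (plugC E₂ t)
  | [], _, _ => rfl
  | F :: E₂, E₁, t => by simp [plugC, plugC_append E₂ E₁ (plugCF F t)]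

/-! #### Handler clause typings -/

theorem retClause_ty {Sg} : ∀ {Γ h S Δ₁ T Δ₂}, HTy Sg Γ h S Δ₁ T Δ₂ →
    TTy Sg (S :: Γ) h.retClause T Δ₂
  | _, _, _, _, _, _, .retH ht => by simpa [Hd.retClause] using ht
  | _, _, _, _, _, _, .opH hh _ _ _ => by
      simpa [Hd.retClause] using retClause_ty hh

theorem lookup_ty {Sg} : ∀ {Γ h S Δ₁ T Δ₂ o t}, HTy Sg Γ h S Δ₁ T Δ₂ →
    h.lookup o = some t →
    TTy Sg (CTy.cont (elabTy1 (Sg.res1 o)) Δ₂ T :: elabTy1 (Sg.arg1 o) :: Γ) t T Δ₂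
  | _, _, _, _, _, _, _, _, .retH _, hl => by simp [Hd.lookup] at hl
  | _, _, _, _, _, _, _, _, .opH hh ht _ _, hl => by
      simp only [Hd.lookup] at hl
      split at hl
      · rename_i heq
        subst heq
        cases hl
        exact ht
      · exact lookup_ty hh hl

/-! #### Preservation -/

theorem core_preservation' (Sg : Sig) (t t' : Tm) (E E' : CCtx)
    (U U' : Finset ℕ) (M M' : Set FPv) (I I' : WithTop ℕ) (T : CTy) (Δ : Eff)
    (hty : TTy Sg [] (plugC E t) T Δ)
    (hstep : CStep ⟨t, E, U, M, I⟩ ⟨t', E', U', M', I'⟩) :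
    TTy Sg [] (plugC E' t') T Δ := by
  cases hstep with
  | app =>
      obtain ⟨S, Δ', hh, hE⟩ := plug_elim hty
      cases hh with
      | app h1 h2 =>
          cases h1 with
          | lam h => exact plug_intro (subst1_ty h h2) hE
  | seq =>
      obtain ⟨S, Δ', hh, hE⟩ := plug_elim hty
      cases hh with
      | seq h1 h2 =>
          cases h1 with
          | ret hn => exact plug_intro (subst1_ty h2 hn) hE
  | hdl =>
      obtain ⟨S, Δ', hh, hE⟩ := plug_elim hty
      cases hh with
      | handle h1 h2 hc =>
          cases h1 with
          | ret hn => exact plug_intro (subst1_ty (retClause_ty h2) hn) hE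
  | pushSeq => simpa only [plugC, plugCF] using hty
  | pushHandle => simpa only [plugC, plugCF] using hty
  | pushDlet => simpa only [plugC, plugCF] using hty
  | pushTls => simpa only [plugC, plugCF] using hty
  | popSeq => simpa only [plugC, plugCF] using hty
  | popHandle => simpa only [plugC, plugCF] using hty
  | gen =>
      obtain ⟨S, Δ', hh, hE⟩ := plug_elim hty
      cases hh with
      | mkvar => exact plug_intro (.ret .fp) hE
  | chs _ =>
      obtain ⟨S, Δ', hh, hE⟩ := plug_elim hty
      cases hh with
      | check hn _ => exact plug_intro (.ret hn) hE
  | chf _ =>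
      obtain ⟨S, Δ', hh, hE⟩ := plug_elim hty
      cases hh with
      | check _ _ => exact plug_intro .err hE
  | cms _ =>
      obtain ⟨S, Δ', hh, hE⟩ := plug_elim hty
      cases hh with
      | checkM hn _ => exact plug_intro (.ret hn) hE
  | cmf _ =>
      obtain ⟨S, Δ', hh, hE⟩ := plug_elim hty
      cases hh with
      | checkM _ _ => exact plug_intro .err hE
  | tls =>
      simp only [plugC, plugCF] at hty
      obtain ⟨S, Δ', hh, hE⟩ := plug_elim hty
      cases hh with
      | tls h => exact plug_intro h hE
  | dlt =>
      simp only [plugC, plugCF] at hty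
      obtain ⟨S, Δ', hh, hE⟩ := plug_elim hty
      cases hh with
      | dlet _ h => exact plug_intro h hE
  | resume =>
      obtain ⟨S, Δ', hh, hE⟩ := plug_elim hty
      cases hh with
      | resume h1 h2 =>
          cases h1 with
          | kont h => exact plug_intro (subst1_ty h h2) hE
  | op E₂ E₁ hlook hnh =>
      rw [plugC_append] at hty
      simp only [plugC, plugCF] at hty
      obtain ⟨T₁, Δ₁', hh, hE₁⟩ := plug_elim hty
      cases hh with
      | handle hbody hH hc =>
          obtain ⟨S₀, Δ₀, hop, hE₂⟩ := plug_elim hbody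
          cases hop with
          | op hn ho =>
              refine plug_intro (subst2_ty (lookup_ty hH hlook) (NTy.kont ?_) hn) hE₁
              exact .handle
                (plug_intro (.ret (.var (by simp)))
                  (hE₂.weaken [elabTy1 (Sg.res1 _)]))
                (weakenH hH _) hc
  end Preservation3
end MetaLang

namespace MetaLang

/-- **Reduction Preservation for λ_AST(op)** (Theorem 3.5): if `E[t]` is
closed and well-typed with computation type `T ! Δ` and
`⟨t; E; U; M; I⟩ → ⟨t'; E'; U'; M'; I'⟩`, then `E'[t']` is closed and
well-typed with computation type `T ! Δ`. -/
theorem core_preservation (Sg : Sig) (t t' : Tm) (E E' : CCtx)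
    (U U' : Finset ℕ) (M M' : Set FPv) (I I' : WithTop ℕ) (T : CTy) (Δ : Eff)
    (hty : TTy Sg [] (plugC E t) T Δ)
    (hstep : CStep ⟨t, E, U, M, I⟩ ⟨t', E', U', M', I'⟩) :
    TTy Sg [] (plugC E' t') T Δ := by
  exact core_preservation' Sg t t' E E' U U' M M' I I' T Δ hty hstep

end MetaLang
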